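/- arXiv:2507.08693 — 8 statements merged into one kernel-verified Lean document; each statement's English description precedes it below -/
import Mathlib

section
/- Let D be a finite set and R ⊆ D² a binary relation. Then R is preserved by the dual discriminator on D if and only if R has one of the following three forms: (1) R = P × Q for some P, Q ⊆ D; (2) R = ({u} × Q) ∪ (P × {v}) for some P, Q ⊆ D with u ∈ P and v ∈ Q; (3) R = {(u, π(u)) : u ∈ P} for some P ⊆ D and some injective function π : P → D. -/
/-- The dual discriminator: outputs `a` if at least two of the arguments equal `a`,
and the first argument if the arguments are pairwise distinct. -/
def dualDisc {D : Type*} [DecidableEq D] (x y z : D) : D :=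
  if x = y then x else if x = z then x else if y = z then y else x

/-- A ternary operation `f` on `D` preserves a binary relation `R ⊆ D²`. -/
def Preserves3 {D : Type*} (f : D → D → D → D) (R : Set (D × D)) : Prop :=
  ∀ p q r : D × D, p ∈ R → q ∈ R → r ∈ R → (f p.1 q.1 r.1, f p.2 q.2 r.2) ∈ R

section Aux
variable {D : Type*} [DecidableEq D]

lemma dd_cases (x y z : D) : dualDisc x y z = x ∨ dualDisc x y z = y ∨ dualDisc x y z = z := by
  unfold dualDisc; split_ifs <;> tauto

lemma dd_ne (x : D) {y z : D} (h : y ≠ z) : dualDisc x y z = x := by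
  unfold dualDisc; split_ifs <;> tauto

lemma dd_snd (x a : D) : dualDisc x a a = a := by
  unfold dualDisc; split_ifs <;> tauto

lemma dd_maj {x y z a : D} (h : (x = a ∧ y = a) ∨ (x = a ∧ z = a) ∨ (y = a ∧ z = a)) :
    dualDisc x y z = a := by
  unfold dualDisc
  rcases h with ⟨h1, h2⟩ | ⟨h1, h2⟩ | ⟨h1, h2⟩ <;> subst h1 <;> subst h2 <;>
    split_ifs <;> tauto

lemma dd_comm_inj {P : Set D} {π : D → D} (hπ : Set.InjOn π P)
    {x y z : D} (hx : x ∈ P) (hy : y ∈ P) (hz : z ∈ P) :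
    dualDisc (π x) (π y) (π z) = π (dualDisc x y z) := by
  by_cases hxy : x = y
  · subst hxy; simp [dualDisc]
  · have h1 := hπ.ne hx hy hxy
    by_cases hxz : x = z
    · subst hxz; simp [dualDisc, hxy, h1]
    · have h2 := hπ.ne hx hz hxz
      by_cases hyz : y = z
      · subst hyz; simp [dualDisc, hxy, hxz, h1, h2]
      · have h3 := hπ.ne hy hz hyz
        simp [dualDisc, hxy, hxz, hyz, h1, h2, h3]

end Aux

/-- A binary relation is preserved by the dual discriminator iff it is a
rectangle `P × Q`, a cross `({u} × Q) ∪ (P × {v})`, or the graph of an injection on `P`. -/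
theorem stmt2 {D : Type*} [Fintype D] [DecidableEq D] (R : Set (D × D)) :
    Preserves3 dualDisc R ↔
      ((∃ P Q : Set D, R = P ×ˢ Q) ∨
       (∃ (P Q : Set D) (u v : D), u ∈ P ∧ v ∈ Q ∧ R = ({u} ×ˢ Q) ∪ (P ×ˢ {v})) ∨
       (∃ (P : Set D) (π : D → D), Set.InjOn π P ∧
          R = {p : D × D | p.1 ∈ P ∧ p.2 = π p.1})) := by
  constructor
  · intro h
    -- key lemmas
    have keyA : ∀ a b b', (a,b) ∈ R → (a,b') ∈ R → b ≠ b' →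
        ∀ x y, (x,y) ∈ R → (a,y) ∈ R := by
      intro a b b' h1 h2 hbb x y hxy
      have := h (x,y) (a,b) (a,b') hxy h1 h2
      simpa [dd_snd, dd_ne _ hbb] using this
    have keyB : ∀ a a' b, (a,b) ∈ R → (a',b) ∈ R → a ≠ a' →
        ∀ x y, (x,y) ∈ R → (x,b) ∈ R := by
      intro a a' b h1 h2 haa x y hxy
      have := h (x,y) (a,b) (a',b) hxy h1 h2
      simpa [dd_snd, dd_ne _ haa] using this
    by_cases hA : ∃ a b b', (a,b) ∈ R ∧ (a,b') ∈ R ∧ b ≠ b'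
    · by_cases hB : ∃ a a' b, (a,b) ∈ R ∧ (a',b) ∈ R ∧ a ≠ a'
      · -- both: rectangle or cross
        obtain ⟨a, b, b', hab, hab', hbb⟩ := hA
        obtain ⟨c, c', d0, hcd, hcd', hcc⟩ := hB
        have hcross1 : ∀ x y, (x,y) ∈ R → (a,y) ∈ R := keyA a b b' hab hab' hbb
        have hcross2 : ∀ x y, (x,y) ∈ R → (x,d0) ∈ R := keyB c c' d0 hcd hcd' hcc
        by_cases hrec : ∃ x y, (x,y) ∈ R ∧ x ≠ a ∧ y ≠ d0
        · left
          obtain ⟨x, y, hxy, hxa, hyd⟩ := hrec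
          refine ⟨{x | ∃ y, (x,y) ∈ R}, {y | ∃ x, (x,y) ∈ R}, ?_⟩
          ext ⟨p, q⟩
          simp only [Set.mem_prod, Set.mem_setOf_eq]
          constructor
          · exact fun hpq => ⟨⟨q, hpq⟩, ⟨p, hpq⟩⟩
          · rintro ⟨⟨q0, hpq0⟩, ⟨p0, hp0q⟩⟩
            have hay : (a, y) ∈ R := hcross1 x y hxy
            have hPy : ∀ x' y', (x',y') ∈ R → (x', y) ∈ R := keyB x a y hxy hay hxa
            have hpy : (p, y) ∈ R := hPy p q0 hpq0
            have hpd : (p, d0) ∈ R := hcross2 p q0 hpq0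
            exact keyA p y d0 hpy hpd hyd p0 q hp0q
        · right; left
          push_neg at hrec
          have had0 : (a, d0) ∈ R := hcross2 a b hab
          refine ⟨{x | (x, d0) ∈ R}, {y | (a, y) ∈ R}, a, d0, had0, had0, ?_⟩
          ext ⟨x, y⟩
          simp only [Set.mem_union, Set.mem_prod, Set.mem_singleton_iff, Set.mem_setOf_eq]
          constructor
          · intro hxy
            by_cases hxa : x = a
            · exact Or.inl ⟨hxa, hxa ▸ hxy⟩
            · exact Or.inr ⟨(hrec x y hxy hxa) ▸ hxy, hrec x y hxy hxa⟩
          · rintro (⟨rfl, hy⟩ | ⟨hx, rfl⟩) <;> assumption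
      · -- only rows repeat: rectangle {a} × Q
        left
        push_neg at hB
        obtain ⟨a, b, b', hab, hab', hbb⟩ := hA
        refine ⟨{a}, {y | (a, y) ∈ R}, ?_⟩
        ext ⟨x, y⟩
        simp only [Set.mem_prod, Set.mem_singleton_iff, Set.mem_setOf_eq]
        constructor
        · intro hxy
          have hay : (a, y) ∈ R := keyA a b b' hab hab' hbb x y hxy
          exact ⟨hB x a y hxy hay, hay⟩
        · rintro ⟨rfl, hy⟩; exact hy
    · by_cases hB : ∃ a a' b, (a,b) ∈ R ∧ (a',b) ∈ R ∧ a ≠ a'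
      · -- rectangle P × {b}
        left
        push_neg at hA
        obtain ⟨c, c', d0, hcd, hcd', hcc⟩ := hB
        refine ⟨{x | (x, d0) ∈ R}, {d0}, ?_⟩
        ext ⟨x, y⟩
        simp only [Set.mem_prod, Set.mem_singleton_iff, Set.mem_setOf_eq]
        constructor
        · intro hxy
          have hxd : (x, d0) ∈ R := keyB c c' d0 hcd hcd' hcc x y hxy
          exact ⟨hxd, hA x y d0 hxy hxd⟩
        · rintro ⟨hx, rfl⟩; exact hx
      · -- graph of injection
        right; right
        push_neg at hA
        push_neg at hB
        classical
        refine ⟨{x | ∃ y, (x, y) ∈ R},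
          fun x => if hx : ∃ y, (x, y) ∈ R then hx.choose else x, ?_, ?_⟩
        · intro x hx x' hx' hxx'
          simp only [Set.mem_setOf_eq] at hx hx'
          simp only [dif_pos hx, dif_pos hx'] at hxx'
          exact hB x x' hx.choose hx.choose_spec (hxx' ▸ hx'.choose_spec)
        · ext ⟨x, y⟩
          simp only [Set.mem_setOf_eq]
          constructor
          · intro hxy
            have hx : ∃ y, (x, y) ∈ R := ⟨y, hxy⟩
            refine ⟨hx, ?_⟩
            simp only [dif_pos hx]
            exact hA x y hx.choose hxy hx.choose_spec
          · rintro ⟨hx, hy⟩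
            simp only [dif_pos hx] at hy
            exact hy ▸ hx.choose_spec
  · rintro (⟨P, Q, rfl⟩ | ⟨P, Q, u, v, hu, hv, rfl⟩ | ⟨P, π, hπ, rfl⟩) <;>
      intro p q r hp hq hr
    · simp only [Set.mem_prod] at *
      constructor
      · rcases dd_cases p.1 q.1 r.1 with h1 | h1 | h1 <;> rw [h1] <;> tauto
      · rcases dd_cases p.2 q.2 r.2 with h2 | h2 | h2 <;> rw [h2] <;> tauto
    · simp only [Set.mem_union, Set.mem_prod, Set.mem_singleton_iff] at *
      have hp1 : p.1 ∈ P := by rcases hp with ⟨h1, _⟩ | ⟨h1, _⟩; exacts [h1.symm ▸ hu, h1]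
      have hq1 : q.1 ∈ P := by rcases hq with ⟨h1, _⟩ | ⟨h1, _⟩; exacts [h1.symm ▸ hu, h1]
      have hr1 : r.1 ∈ P := by rcases hr with ⟨h1, _⟩ | ⟨h1, _⟩; exacts [h1.symm ▸ hu, h1]
      have hp2 : p.2 ∈ Q := by rcases hp with ⟨_, h2⟩ | ⟨_, h2⟩; exacts [h2, h2.symm ▸ hv]
      have hq2 : q.2 ∈ Q := by rcases hq with ⟨_, h2⟩ | ⟨_, h2⟩; exacts [h2, h2.symm ▸ hv]
      have hr2 : r.2 ∈ Q := by rcases hr with ⟨_, h2⟩ | ⟨_, h2⟩; exacts [h2, h2.symm ▸ hv]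
      have memP : dualDisc p.1 q.1 r.1 ∈ P := by
        rcases dd_cases p.1 q.1 r.1 with h | h | h <;> rw [h] <;> assumption
      have memQ : dualDisc p.2 q.2 r.2 ∈ Q := by
        rcases dd_cases p.2 q.2 r.2 with h | h | h <;> rw [h] <;> assumption
      rcases hp with ⟨h1, _⟩ | ⟨_, h1⟩ <;> rcases hq with ⟨h2, _⟩ | ⟨_, h2⟩ <;>
        rcases hr with ⟨h3, _⟩ | ⟨_, h3⟩
      · exact Or.inl ⟨dd_maj (Or.inl ⟨h1, h2⟩), memQ⟩
      · exact Or.inl ⟨dd_maj (Or.inl ⟨h1, h2⟩), memQ⟩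
      · exact Or.inl ⟨dd_maj (Or.inr (Or.inl ⟨h1, h3⟩)), memQ⟩
      · exact Or.inr ⟨memP, dd_maj (Or.inr (Or.inr ⟨h2, h3⟩))⟩
      · exact Or.inl ⟨dd_maj (Or.inr (Or.inr ⟨h2, h3⟩)), memQ⟩
      · exact Or.inr ⟨memP, dd_maj (Or.inr (Or.inl ⟨h1, h3⟩))⟩
      · exact Or.inr ⟨memP, dd_maj (Or.inl ⟨h1, h2⟩)⟩
      · exact Or.inr ⟨memP, dd_maj (Or.inl ⟨h1, h2⟩)⟩
    · simp only [Set.mem_setOf_eq] at *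
      refine ⟨?_, ?_⟩
      · rcases dd_cases p.1 q.1 r.1 with h1 | h1 | h1 <;> rw [h1] <;> tauto
      · rw [hp.2, hq.2, hr.2]
        exact dd_comm_inj hπ hp.1 hq.1 hr.1
end

section
/- Let D be a finite set and R ⊆ D² a binary relation preserved by the dual discriminator on D, and let Q = {y ∈ D : ∃x ∈ D, (x,y) ∈ R}. If u ∈ D and there exist distinct v₁ ≠ v₂ in D with (u,v₁) ∈ R and (u,v₂) ∈ R, then (u,v) ∈ R for every v ∈ Q, i.e., {u} × Q ⊆ R. -/
/-- If `R` is preserved by the dual discriminator and `u` is related to two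
distinct elements, then `u` is related to every element of the second projection `Q` of `R`. -/
theorem stmt3 {D : Type*} [Fintype D] [DecidableEq D] (R : Set (D × D))
    (hdd : Preserves3 dualDisc R)
    (Q : Set D) (hQ : Q = {y : D | ∃ x : D, (x, y) ∈ R})
    (u v₁ v₂ : D) (hne : v₁ ≠ v₂) (h1 : (u, v₁) ∈ R) (h2 : (u, v₂) ∈ R) :
    ∀ v ∈ Q, (u, v) ∈ R := by
  intro v hv
  rw [hQ] at hv
  obtain ⟨x, hx⟩ := hv
  have := hdd (x, v) (u, v₁) (u, v₂) hx h1 h2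
  simp only [dualDisc] at this
  split_ifs at this <;> simp_all
end

section
/- Let D be a finite set and R ⊆ D² a binary relation preserved by the dual discriminator on D. Let P = {x ∈ D : ∃y, (x,y) ∈ R} and Q = {y ∈ D : ∃x, (x,y) ∈ R}. If there exist distinct u₁ ≠ u₂ in P with {u₁} × Q ⊆ R and {u₂} × Q ⊆ R, then R = P × Q. -/
/-- If `R` is preserved by the dual discriminator and two distinct elements
`u₁ ≠ u₂` of the first projection `P` satisfy `{uᵢ} × Q ⊆ R`, then `R = P × Q`. -/
theorem stmt4 {D : Type*} [Fintype D] [DecidableEq D] (R : Set (D × D))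
    (hdd : Preserves3 dualDisc R)
    (P Q : Set D)
    (hP : P = {x : D | ∃ y : D, (x, y) ∈ R})
    (hQ : Q = {y : D | ∃ x : D, (x, y) ∈ R})
    (u₁ u₂ : D) (hne : u₁ ≠ u₂) (hu₁ : u₁ ∈ P) (hu₂ : u₂ ∈ P)
    (h1 : {u₁} ×ˢ Q ⊆ R) (h2 : {u₂} ×ˢ Q ⊆ R) :
    R = P ×ˢ Q := by
  ext ⟨x, y⟩
  constructor
  · intro h
    exact ⟨hP ▸ ⟨y, h⟩, hQ ▸ ⟨x, h⟩⟩
  · rintro ⟨hx, hy⟩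
    obtain ⟨y', hy'⟩ := hP ▸ hx
    have hr1 : (u₁, y) ∈ R := h1 ⟨rfl, hy⟩
    have hr2 : (u₂, y) ∈ R := h2 ⟨rfl, hy⟩
    have := hdd (x, y') (u₁, y) (u₂, y) hy' hr1 hr2
    have e1 : dualDisc x u₁ u₂ = x := by
      unfold dualDisc; split_ifs <;> simp_all
    have e2 : dualDisc y' y y = y := by
      unfold dualDisc; split_ifs <;> simp_all
    simpa [e1, e2] using this
end

section
/- Let D be a finite set and I = (V, {R_u}_{u∈V}, {R_{u,v}}_{u≠v∈V}) a nontrivial binary (2,3)-minimal instance over D such that every binary relation R_{u,v} is preserved by the dual discriminator on D. Let u₀ ∈ V and a ∈ R_{u₀}, let S be the set of variables fixed by assigning a to u₀, and for v ∈ S let A_S(v) be the unique label that v is fixed to by assigning a to u₀. Let A' : V∖S → D be any assignment with A'(u) ∈ R_u for all u ∈ V∖S and (A'(u),A'(v)) ∈ R_{u,v} for all distinct u,v ∈ V∖S. Then the assignment A : V → D defined by A(v) = A_S(v) for v ∈ S and A(v) = A'(v) for v ∉ S is a satisfying assignment for I. -/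
/-- A binary instance `(V, {R_u}, {R_{u,v}})` is (2,3)-minimal. -/
def Minimal23 {V D : Type*} (Ru : V → Set D) (Rp : V → V → Set (D × D)) : Prop :=
  (∀ u v : V, u ≠ v → ∀ a b : D, (a, b) ∈ Rp u v ↔ (b, a) ∈ Rp v u) ∧
  (∀ u v : V, u ≠ v → ∀ a : D, a ∈ Ru u ↔ ∃ b : D, (a, b) ∈ Rp u v) ∧
  (∀ u v w : V, u ≠ v → u ≠ w → v ≠ w → ∀ a b : D, (a, b) ∈ Rp u v →
    ∃ c ∈ Ru w, (a, c) ∈ Rp u w ∧ (b, c) ∈ Rp v w)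

/-- `v` is fixed to `b ∈ R_v` by assigning `a` to `u₀`: either `v = u₀` and `b = a`, or
`v ≠ u₀` and `R_{u₀,v} ∩ ({a} × R_v) = {(a,b)}`. -/
def FixedTo {V D : Type*} (Ru : V → Set D) (Rp : V → V → Set (D × D))
    (u₀ : V) (a : D) (v : V) (b : D) : Prop :=
  b ∈ Ru v ∧ ((v = u₀ ∧ b = a) ∨ (v ≠ u₀ ∧ Rp u₀ v ∩ ({a} ×ˢ Ru v) = {(a, b)}))

lemma dd_aab {D : Type*} [DecidableEq D] (e a : D) : dualDisc e a a = a := by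
  unfold dualDisc; split_ifs <;> simp_all

lemma dd_fst {D : Type*} [DecidableEq D] (c c1 c2 : D) (h : c1 ≠ c2) :
    dualDisc c c1 c2 = c := by
  unfold dualDisc; split_ifs <;> simp_all

/-- combining the unique labels of the variables fixed by assigning `a` to `u₀`
with any satisfying assignment of the instance induced on the unfixed variables yields a
satisfying assignment for the whole instance. -/
theorem stmt5 {V D : Type*} [Fintype V] [Fintype D] [DecidableEq D]
    (Ru : V → Set D) (Rp : V → V → Set (D × D))
    (hmin : Minimal23 Ru Rp)
    (hnontriv : ∀ u : V, (Ru u).Nonempty)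
    (hdd : ∀ u v : V, u ≠ v → Preserves3 dualDisc (Rp u v))
    (u₀ : V) (a : D) (ha : a ∈ Ru u₀)
    (S : Set V) (hS : S = {v : V | ∃ b : D, FixedTo Ru Rp u₀ a v b})
    (AS : V → D) (hAS : ∀ v ∈ S, FixedTo Ru Rp u₀ a v (AS v))
    (A' : V → D)
    (hA'u : ∀ u : V, u ∉ S → A' u ∈ Ru u)
    (hA'p : ∀ u v : V, u ∉ S → v ∉ S → u ≠ v → (A' u, A' v) ∈ Rp u v)
    (A : V → D) (hA : ∀ v : V, (v ∈ S → A v = AS v) ∧ (v ∉ S → A v = A' v)) :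
    (∀ u : V, A u ∈ Ru u) ∧ ∀ u v : V, u ≠ v → (A u, A v) ∈ Rp u v := by
  obtain ⟨hsym, hproj, htri⟩ := hmin
  have hu₀S : u₀ ∈ S := by
    rw [hS]; exact ⟨a, ha, Or.inl ⟨rfl, rfl⟩⟩
  have hmemRp : ∀ u v : V, u ≠ v → ∀ x y : D, (x, y) ∈ Rp u v → y ∈ Ru v := by
    intro u v h x y hxy
    exact (hproj v u h.symm y).mpr ⟨x, (hsym u v h x y).mp hxy⟩
  -- facts about fixed variables other than u₀
  have hfix : ∀ v ∈ S, v ≠ u₀ → (a, AS v) ∈ Rp u₀ v ∧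
      ∀ c : D, c ∈ Ru v → (a, c) ∈ Rp u₀ v → c = AS v := by
    intro v hv hvne
    obtain ⟨hASR, hcase⟩ := hAS v hv
    rcases hcase with ⟨h1, _⟩ | ⟨_, heq⟩
    · exact absurd h1 hvne
    constructor
    · have hmem : (a, AS v) ∈ Rp u₀ v ∩ ({a} ×ˢ Ru v) := by rw [heq]; rfl
      exact hmem.1
    · intro c hcR hc
      have hmem : (a, c) ∈ ({(a, AS v)} : Set (D × D)) := by
        rw [← heq]; exact ⟨hc, rfl, hcR⟩
      exact (Prod.ext_iff.mp (Set.mem_singleton_iff.mp hmem)).2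
  have hASu₀ : AS u₀ = a := by
    obtain ⟨_, hcase⟩ := hAS u₀ hu₀S
    rcases hcase with ⟨_, h⟩ | ⟨h, _⟩
    · exact h
    · exact absurd rfl h
  -- unfixed variables have a full column above a
  have hfull : ∀ v : V, v ∉ S → ∀ c ∈ Ru v, (a, c) ∈ Rp u₀ v := by
    intro v hvS c hc
    have hvne : v ≠ u₀ := fun h => hvS (h ▸ hu₀S)
    obtain ⟨c1, hc1⟩ := (hproj u₀ v hvne.symm a).mp ha
    have hc1R : c1 ∈ Ru v := hmemRp u₀ v hvne.symm a c1 hc1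
    have hnotfix : ¬ FixedTo Ru Rp u₀ a v c1 := by
      intro hf
      exact hvS (by rw [hS]; exact ⟨c1, hf⟩)
    have hne : Rp u₀ v ∩ ({a} ×ˢ Ru v) ≠ {(a, c1)} := by
      intro h
      exact hnotfix ⟨hc1R, Or.inr ⟨hvne, h⟩⟩
    have hsub : ({(a, c1)} : Set (D × D)) ⊆ Rp u₀ v ∩ ({a} ×ˢ Ru v) := by
      intro p hp
      rw [Set.mem_singleton_iff] at hp
      subst hp
      exact ⟨hc1, rfl, hc1R⟩
    have hnsub : ¬ (Rp u₀ v ∩ ({a} ×ˢ Ru v) ⊆ {(a, c1)}) :=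
      fun h => hne (Set.Subset.antisymm h hsub)
    obtain ⟨p, hp, hpne⟩ := Set.not_subset.mp hnsub
    obtain ⟨x, c2⟩ := p
    have hx : x = a := hp.2.1
    subst hx
    have hc2 : (x, c2) ∈ Rp u₀ v := hp.1
    have hc12 : c1 ≠ c2 := by
      intro h
      exact hpne (by simp [h])
    obtain ⟨e, he⟩ := (hproj v u₀ hvne c).mp hc
    have hec : (e, c) ∈ Rp u₀ v := (hsym v u₀ hvne c e).mp he
    have hres := hdd u₀ v hvne.symm (e, c) (x, c1) (x, c2) hec hc1 hc2
    simp only at hres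
    rwa [dd_aab e x, dd_fst c c1 c2 hc12] at hres
  -- two fixed variables are compatible
  have key1 : ∀ u v : V, u ≠ v → u ∈ S → v ∈ S → (AS u, AS v) ∈ Rp u v := by
    intro u v huv huS hvS
    by_cases hu0 : u = u₀
    · subst hu0; rw [hASu₀]
      exact (hfix v hvS (Ne.symm huv)).1
    by_cases hv0 : v = u₀
    · rw [hv0, hASu₀]
      exact (hsym u u₀ hu0 (AS u) a).mpr ((hfix u huS hu0).1)
    · have hau : (a, AS u) ∈ Rp u₀ u := (hfix u huS hu0).1
      obtain ⟨e, heR, hae, hASe⟩ := htri u₀ u v (Ne.symm hu0) (Ne.symm hv0) huv a (AS u) hau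
      have he : e = AS v := (hfix v hvS hv0).2 e heR hae
      exact he ▸ hASe
  -- a fixed variable is compatible with anything on an unfixed variable
  have key2 : ∀ u v : V, u ≠ v → u ∈ S → v ∉ S → ∀ c ∈ Ru v, (AS u, c) ∈ Rp u v := by
    intro u v huv huS hvS c hc
    by_cases hu0 : u = u₀
    · subst hu0; rw [hASu₀]; exact hfull v hvS c hc
    · have hac : (a, c) ∈ Rp u₀ v := hfull v hvS c hc
      have hvne : v ≠ u₀ := fun h => hvS (h ▸ hu₀S)
      obtain ⟨e, heR, hae, hce⟩ := htri u₀ v u hvne.symm (Ne.symm hu0) (Ne.symm huv) a c hac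
      have he : e = AS u := (hfix u huS hu0).2 e heR hae
      exact (hsym u v huv (AS u) c).mpr (he ▸ hce)
  have hAmem : ∀ v : V, A v ∈ Ru v := by
    intro v
    by_cases hv : v ∈ S
    · rw [(hA v).1 hv]; exact (hAS v hv).1
    · rw [(hA v).2 hv]; exact hA'u v hv
  refine ⟨hAmem, ?_⟩
  intro u v huv
  by_cases hu : u ∈ S <;> by_cases hv : v ∈ S
  · rw [(hA u).1 hu, (hA v).1 hv]; exact key1 u v huv hu hv
  · rw [(hA u).1 hu, (hA v).2 hv]; exact key2 u v huv hu hv (A' v) (hA'u v hv)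
  · rw [(hA u).2 hu, (hA v).1 hv]
    exact (hsym u v huv _ _).mpr (key2 v u (Ne.symm huv) hv hu (A' u) (hA'u u hu))
  · rw [(hA u).2 hu, (hA v).2 hv]; exact hA'p u v hu hv huv
end

section
/- Let V and D be finite sets and R a finite nonempty index set. For each a ∈ R let F_a ⊆ V be a subset and A_a : V → D a function, and let t : V × D → ℝ satisfy t(u,b) ≥ 0 for all (u,b). Set c_a = ∑_{u∈F_a} t(u, A_a(u)) and let a₀ ∈ R satisfy c_{a₀} ≤ c_a for all a ∈ R. Suppose for each a ∈ R there is a function t_a : V → ℝ with 0 ≤ t_a(u) ≤ t(u, A_a(u)) for all u ∈ F_a and ∑_{u∈F_a} t_a(u) = c_{a₀}. Define Δ : V × D → ℝ by Δ(u,b) = max({t_a(u) : a ∈ R, u ∈ F_a, A_a(u) = b} ∪ {0}). Then for every a* ∈ R, ∑_{(u,b)∈V×D} Δ(u,b) ≤ |R| · ∑_{u∈F_{a*}} Δ(u, A_{a*}(u)). -/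
/-- the per-iteration accounting inequality of the greedy algorithm:
the total decrease `∑_{(u,b)} Δ(u,b)` of the derived cost is at most `|R|` times the
decrease along the labels chosen by any fixed assignment `a*`. -/
theorem stmt7 {V D R : Type*} [Fintype V] [Fintype D] [Fintype R] [Nonempty R]
    (F : R → Finset V) (A : R → V → D)
    (t : V → D → ℝ) (ht : ∀ u b, 0 ≤ t u b)
    (c : R → ℝ) (hc : ∀ a : R, c a = ∑ u ∈ F a, t u (A a u))
    (a₀ : R) (ha₀ : ∀ a : R, c a₀ ≤ c a)
    (ta : R → V → ℝ)
    (hta : ∀ a : R, ∀ u ∈ F a, 0 ≤ ta a u ∧ ta a u ≤ t u (A a u))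
    (hsum : ∀ a : R, ∑ u ∈ F a, ta a u = c a₀)
    (Δ : V → D → ℝ)
    (hΔ : ∀ u b, Δ u b = sSup ({x : ℝ | ∃ a : R, u ∈ F a ∧ A a u = b ∧ x = ta a u} ∪ {0}))
    (astar : R) :
    ∑ u : V, ∑ b : D, Δ u b ≤ (Fintype.card R : ℝ) * ∑ u ∈ F astar, Δ u (A astar u) := by
  classical
  have hfin : ∀ u b, (({x : ℝ | ∃ a : R, u ∈ F a ∧ A a u = b ∧ x = ta a u} ∪ {0}) : Set ℝ).Finite := by
    intro u b
    apply Set.Finite.union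
    · exact (Set.finite_range (fun a : R => ta a u)).subset
        (by rintro x ⟨a, _, _, rfl⟩; exact ⟨a, rfl⟩)
    · exact Set.finite_singleton 0
  -- upper bound on Δ u b
  have h1 : ∀ u b, Δ u b ≤ ∑ a : R, (if u ∈ F a ∧ A a u = b then ta a u else 0) := by
    intro u b
    have hnn : ∀ a : R, (0:ℝ) ≤ (if u ∈ F a ∧ A a u = b then ta a u else 0) := by
      intro a; split
      · exact (hta a u (by tauto)).1
      · exact le_refl 0
    rw [hΔ]
    apply Real.sSup_le
    · rintro x (⟨a, hu, hb, rfl⟩ | hx)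
      · have := Finset.single_le_sum (f := fun a : R => if u ∈ F a ∧ A a u = b then ta a u else 0)
          (fun a _ => hnn a) (Finset.mem_univ a)
        simpa [hu, hb] using this
      · simp only [Set.mem_singleton_iff] at hx
        subst hx
        exact Finset.sum_nonneg (fun a _ => hnn a)
    · exact Finset.sum_nonneg (fun a _ => hnn a)
  -- lower bound
  have h2 : ∀ u ∈ F astar, ta astar u ≤ Δ u (A astar u) := by
    intro u hu
    rw [hΔ]
    exact le_csSup (hfin u (A astar u)).bddAbove (Or.inl ⟨astar, hu, rfl, rfl⟩)
  have key : ∑ u : V, ∑ b : D, Δ u b ≤ (Fintype.card R : ℝ) * c a₀ := by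
    calc ∑ u : V, ∑ b : D, Δ u b
        ≤ ∑ u : V, ∑ b : D, ∑ a : R, (if u ∈ F a ∧ A a u = b then ta a u else 0) :=
          Finset.sum_le_sum (fun u _ => Finset.sum_le_sum (fun b _ => h1 u b))
      _ = ∑ a : R, ∑ u : V, ∑ b : D, (if u ∈ F a ∧ A a u = b then ta a u else 0) := by
          have step : ∀ u : V, ∑ b : D, ∑ a : R, (if u ∈ F a ∧ A a u = b then ta a u else 0)
              = ∑ a : R, ∑ b : D, (if u ∈ F a ∧ A a u = b then ta a u else 0) :=
            fun u => Finset.sum_comm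
          rw [Finset.sum_congr rfl fun u _ => step u]
          exact Finset.sum_comm
      _ = ∑ a : R, c a₀ := by
          refine Finset.sum_congr rfl (fun a _ => ?_)
          rw [← hsum a]
          have hb : ∀ u, ∑ b : D, (if u ∈ F a ∧ A a u = b then ta a u else 0)
              = if u ∈ F a then ta a u else 0 := by
            intro u; by_cases hu : u ∈ F a <;> simp [hu, Finset.sum_ite_eq]
          rw [Finset.sum_congr rfl fun u _ => hb u]
          simp [Finset.sum_ite_mem]
      _ = (Fintype.card R : ℝ) * c a₀ := by
          rw [Finset.sum_const, Finset.card_univ, nsmul_eq_mul]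
  refine key.trans ?_
  apply mul_le_mul_of_nonneg_left _ (by positivity)
  calc c a₀ = ∑ u ∈ F astar, ta astar u := (hsum astar).symm
    _ ≤ ∑ u ∈ F astar, Δ u (A astar u) := Finset.sum_le_sum (fun u hu => h2 u hu)
end

section
/- Let D be a finite nonempty set and I = (V, {R_u}_{u∈V}, {R_{u,v}}_{u≠v∈V}) a nontrivial binary (2,3)-minimal instance over D such that every binary relation R_{u,v} is preserved by the dual discriminator on D. Let p : V × D → ℝ satisfy: p(v,a) ≥ 0 for all (v,a); ∑_{a∈D} p(v,a) = 1 for all v ∈ V; p(v,a) = 0 whenever a ∉ R_v; and for all distinct u,v ∈ V there exists q : D × D → ℝ with q(a,b) ≥ 0 for all (a,b), q(a,b) = 0 whenever (a,b) ∉ R_{u,v}, ∑_{b∈D} q(a,b) = p(u,a) for all a ∈ D, and ∑_{a∈D} q(a,b) = p(v,b) for all b ∈ D. Define R'_v = {a ∈ R_v : p(v,a) ≥ 1/|D|} for each v ∈ V and R'_{u,v} = R_{u,v} ∩ (R'_u × R'_v) for all distinct u,v. Then R'_v ≠ ∅ for every v ∈ V, the instance I' = (V, {R'_v}, {R'_{u,v}})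 is (2,3)-minimal, and every R'_{u,v} is preserved by the dual discriminator on D. -/
lemma dualDisc_xaa {D : Type*} [DecidableEq D] (x a : D) : dualDisc x a a = a := by
  unfold dualDisc
  split_ifs <;> simp_all

lemma dualDisc_snd_eq {D : Type*} [DecidableEq D] {b b1 b2 : D} (h : b1 ≠ b2) :
    dualDisc b b1 b2 = b := by
  unfold dualDisc
  split_ifs <;> simp_all

lemma dualDisc_mem {D : Type*} [DecidableEq D] (x y z : D) :
    dualDisc x y z = x ∨ dualDisc x y z = y ∨ dualDisc x y z = z := by
  unfold dualDisc
  split_ifs <;> tauto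

/-- Row absorption: in a relation preserved by the dual discriminator, if the row of `a`
contains two distinct elements, then it contains every element appearing in some row. -/
lemma row_absorb {D : Type*} [DecidableEq D] {R : Set (D × D)}
    (hR : Preserves3 dualDisc R) {a b1 b2 a' b : D}
    (h1 : (a, b1) ∈ R) (h2 : (a, b2) ∈ R) (hne : b1 ≠ b2) (h3 : (a', b) ∈ R) :
    (a, b) ∈ R := by
  have := hR (a', b) (a, b1) (a, b2) h3 h1 h2
  simpa [dualDisc_xaa, dualDisc_snd_eq hne] using this

/-- discarding the labels of LP-probability below `1/|D|` from a nontrivial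
(2,3)-minimal instance preserved by the dual discriminator yields a nontrivial
(2,3)-minimal instance preserved by the dual discriminator. -/
theorem stmt8 {V D : Type*} [Fintype V] [Fintype D] [DecidableEq D] [Nonempty D]
    (Ru : V → Set D) (Rp : V → V → Set (D × D))
    (hmin : Minimal23 Ru Rp)
    (hnontriv : ∀ u : V, (Ru u).Nonempty)
    (hdd : ∀ u v : V, u ≠ v → Preserves3 dualDisc (Rp u v))
    (p : V → D → ℝ)
    (hp0 : ∀ v a, 0 ≤ p v a)
    (hp1 : ∀ v : V, ∑ a : D, p v a = 1)
    (hpR : ∀ v a, a ∉ Ru v → p v a = 0)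
    (hq : ∀ u v : V, u ≠ v → ∃ q : D → D → ℝ,
      (∀ a b, 0 ≤ q a b) ∧ (∀ a b, (a, b) ∉ Rp u v → q a b = 0) ∧
      (∀ a : D, ∑ b : D, q a b = p u a) ∧ (∀ b : D, ∑ a : D, q a b = p v b))
    (Ru' : V → Set D)
    (hRu' : ∀ v : V, Ru' v = {a ∈ Ru v | 1 / (Fintype.card D : ℝ) ≤ p v a})
    (Rp' : V → V → Set (D × D))
    (hRp' : ∀ u v : V, u ≠ v → Rp' u v = Rp u v ∩ (Ru' u ×ˢ Ru' v)) :
    (∀ v : V, (Ru' v).Nonempty) ∧ Minimal23 Ru' Rp' ∧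
      ∀ u v : V, u ≠ v → Preserves3 dualDisc (Rp' u v) := by
  have hcard : 0 < (Fintype.card D : ℝ) := by exact_mod_cast Fintype.card_pos
  have hmemRu' : ∀ (v : V) (a : D),
      a ∈ Ru' v ↔ a ∈ Ru v ∧ 1 / (Fintype.card D : ℝ) ≤ p v a := by
    intro v a; rw [hRu' v]; exact Iff.rfl
  have hmemRp' : ∀ (u v : V), u ≠ v → ∀ a b : D,
      (a, b) ∈ Rp' u v ↔ (a, b) ∈ Rp u v ∧ a ∈ Ru' u ∧ b ∈ Ru' v := by
    intro u v huv a b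
    rw [hRp' u v huv]
    simp [Set.mem_prod]
  -- nonemptiness
  have hne : ∀ v : V, (Ru' v).Nonempty := by
    intro v
    have hex : ∃ a : D, 1 / (Fintype.card D : ℝ) ≤ p v a := by
      by_contra h
      push_neg at h
      have h2 : ∑ a : D, p v a < ∑ _a : D, 1 / (Fintype.card D : ℝ) :=
        Finset.sum_lt_sum_of_nonempty Finset.univ_nonempty (fun a _ => h a)
      rw [hp1 v, Finset.sum_const, Finset.card_univ, nsmul_eq_mul, mul_one_div,
        div_self (ne_of_gt hcard)] at h2
      exact lt_irrefl 1 h2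
    obtain ⟨a, ha⟩ := hex
    have haR : a ∈ Ru v := by
      by_contra hn
      have h0 := hpR v a hn
      have : (0:ℝ) < 1 / (Fintype.card D : ℝ) := by positivity
      linarith
    exact ⟨a, (hmemRu' v a).mpr ⟨haR, ha⟩⟩
  -- key dichotomy
  have key : ∀ u v : V, u ≠ v → ∀ a : D, a ∈ Ru u → 1 / (Fintype.card D : ℝ) ≤ p u a →
      (∃ c, c ∈ Ru v ∧ 1 / (Fintype.card D : ℝ) ≤ p v c ∧ (a, c) ∈ Rp u v ∧
        ∀ c', (a, c') ∈ Rp u v → c' = c) ∨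
      (∀ c ∈ Ru v, (a, c) ∈ Rp u v) := by
    intro u v huv a haR hap
    obtain ⟨b0, hb0⟩ := (hmin.2.1 u v huv a).mp haR
    by_cases hsing : ∃ b1 b2, (a, b1) ∈ Rp u v ∧ (a, b2) ∈ Rp u v ∧ b1 ≠ b2
    · obtain ⟨b1, b2, h1, h2, hne12⟩ := hsing
      right
      intro c hc
      obtain ⟨a', ha'⟩ := (hmin.2.1 v u huv.symm c).mp hc
      have hac : (a', c) ∈ Rp u v := (hmin.1 u v huv a' c).mpr ha'
      exact row_absorb (hdd u v huv) h1 h2 hne12 hac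
    · left
      push_neg at hsing
      have huniq : ∀ c', (a, c') ∈ Rp u v → c' = b0 := fun c' hc' => hsing c' b0 hc' hb0
      have hb0R : b0 ∈ Ru v :=
        (hmin.2.1 v u huv.symm b0).mpr ⟨a, (hmin.1 u v huv a b0).mp hb0⟩
      obtain ⟨q, hq0, hqR, hqu, hqv⟩ := hq u v huv
      have h1 : p u a = q a b0 := by
        rw [← hqu a]
        refine Finset.sum_eq_single b0 (fun b _ hb => hqR a b (fun hmem => hb (huniq b hmem)))
          (fun h => absurd (Finset.mem_univ b0) h)
      have h2 : q a b0 ≤ p v b0 := by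
        rw [← hqv b0]
        exact Finset.single_le_sum (fun a' _ => hq0 a' b0) (Finset.mem_univ a)
      exact ⟨b0, hb0R, by linarith, hb0, huniq⟩
  refine ⟨hne, ⟨?_, ?_, ?_⟩, ?_⟩
  · -- symmetry
    intro u v huv a b
    rw [hmemRp' u v huv, hmemRp' v u huv.symm, hmin.1 u v huv a b]
    tauto
  · -- projection
    intro u v huv a
    constructor
    · intro ha
      obtain ⟨haR, hap⟩ := (hmemRu' u a).mp ha
      rcases key u v huv a haR hap with ⟨c, hcR, hcp, hac, _⟩ | hfull
      · exact ⟨c, (hmemRp' u v huv a c).mpr ⟨hac, ha, (hmemRu' v c).mpr ⟨hcR, hcp⟩⟩⟩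
      · obtain ⟨b, hb⟩ := hne v
        exact ⟨b, (hmemRp' u v huv a b).mpr ⟨hfull b ((hmemRu' v b).mp hb).1, ha, hb⟩⟩
    · rintro ⟨b, hb⟩
      exact ((hmemRp' u v huv a b).mp hb).2.1
  · -- path consistency
    intro u v w huv huw hvw a b hab
    obtain ⟨habR, ha', hb'⟩ := (hmemRp' u v huv a b).mp hab
    obtain ⟨haR, hap⟩ := (hmemRu' u a).mp ha'
    obtain ⟨hbR, hbp⟩ := (hmemRu' v b).mp hb'
    rcases key u w huw a haR hap with ⟨c, hcR, hcp, hac, huniq⟩ | hufull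
    · obtain ⟨c0, hc0R, hac0, hbc0⟩ := hmin.2.2 u v w huv huw hvw a b habR
      have hc0 : c0 = c := huniq c0 hac0
      subst hc0
      have hcmem : c0 ∈ Ru' w := (hmemRu' w c0).mpr ⟨hc0R, hcp⟩
      exact ⟨c0, hcmem, (hmemRp' u w huw a c0).mpr ⟨hac0, ha', hcmem⟩,
        (hmemRp' v w hvw b c0).mpr ⟨hbc0, hb', hcmem⟩⟩
    · rcases key v w hvw b hbR hbp with ⟨c, hcR, hcp, hbc, huniqv⟩ | hvfull
      · have hba : (b, a) ∈ Rp v u := (hmin.1 u v huv a b).mp habR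
        obtain ⟨c0, hc0R, hbc0, hac0⟩ := hmin.2.2 v u w huv.symm hvw huw b a hba
        have hc0 : c0 = c := huniqv c0 hbc0
        subst hc0
        have hcmem : c0 ∈ Ru' w := (hmemRu' w c0).mpr ⟨hc0R, hcp⟩
        exact ⟨c0, hcmem, (hmemRp' u w huw a c0).mpr ⟨hac0, ha', hcmem⟩,
          (hmemRp' v w hvw b c0).mpr ⟨hbc0, hb', hcmem⟩⟩
      · obtain ⟨c, hc⟩ := hne w
        have hcRw : c ∈ Ru w := ((hmemRu' w c).mp hc).1
        exact ⟨c, hc, (hmemRp' u w huw a c).mpr ⟨hufull c hcRw, ha', hc⟩,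
          (hmemRp' v w hvw b c).mpr ⟨hvfull c hcRw, hb', hc⟩⟩
  · -- preservation
    intro u v huv x y z hx hy hz
    rw [hRp' u v huv] at hx hy hz ⊢
    obtain ⟨hxR, hx1, hx2⟩ := hx
    obtain ⟨hyR, hy1, hy2⟩ := hy
    obtain ⟨hzR, hz1, hz2⟩ := hz
    refine ⟨hdd u v huv x y z hxR hyR hzR, ?_, ?_⟩
    · rcases dualDisc_mem x.1 y.1 z.1 with h | h | h <;> simp only [h] <;> assumption
    · rcases dualDisc_mem x.2 y.2 z.2 with h | h | h <;> simp only [h] <;> assumption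
end

section
/- Let G = (V, E) be a finite undirected graph with edge weights w : E → ℝ≥0, and let W = ∑_{e∈E} w_e. Consider the following instance I of MinCostCSP over domain A = {0,1,2} with the single relation P_H: the variable set is V together with two fresh variables z_e and z'_e for every e ∈ E; for each edge e = {x,y} ∈ E there are three constraints P_H(x, z_e), P_H(z_e, z'_e), P_H(z'_e, y); the costs are cost(x,0) = cost(x,1) = 0 and cost(x,2) = W for every x ∈ V, and cost(z_e,0) = cost(z_e,1) = cost(z'_e,0) = cost(z'_e,1) = 0 and cost(z_e,2) = cost(z'_e,2) = w_e for every e ∈ E. Then the minimum total cost of an assignment of labels in A to the variables satisfying all constraints of I equals the Min UnCut value of (G,w). -/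
/-- `P_H ⊆ {0,1,2}²`: `(x,y) ∈ P_H` iff `x ≠ y` or `x = y = 2`. -/
def PH : Set (Fin 3 × Fin 3) := {p : Fin 3 × Fin 3 | p.1 ≠ p.2 ∨ (p.1 = 2 ∧ p.2 = 2)}

lemma PH_iff (a b : Fin 3) : (a, b) ∈ PH ↔ (a ≠ b ∨ (a = 2 ∧ b = 2)) := Iff.rfl

lemma PH_key : ∀ a b z z' : Fin 3, a ≠ 2 → b ≠ 2 → ((a = 1) ↔ (b = 1)) →
    (a ≠ z ∨ (a = 2 ∧ z = 2)) → (z ≠ z' ∨ (z = 2 ∧ z' = 2)) →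
    (z' ≠ b ∨ (z' = 2 ∧ b = 2)) → z = 2 ∨ z' = 2 := by decide

/-- the minimum cost of a satisfying assignment of the MinCostCSP(P_H)
instance constructed from a weighted graph `(V, E, w)` (variables `V ⊎ {z_e, z'_e}`,
constraints `P_H(x,z_e), P_H(z_e,z'_e), P_H(z'_e,y)` for each edge `e = {x,y}`, costs as
described) equals the Min UnCut value of `(G, w)`. -/
theorem stmt11 {V E : Type*} [Fintype V] [Fintype E]
    (ends : E → V × V) (w : E → ℝ) (hw : ∀ e, 0 ≤ w e)
    (W : ℝ) (hW : W = ∑ e : E, w e)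
    (cost : (V ⊕ E × Bool) → Fin 3 → ℝ)
    (hcostV : ∀ (x : V) (a : Fin 3), cost (Sum.inl x) a = if a = 2 then W else 0)
    (hcostE : ∀ (e : E) (i : Bool) (a : Fin 3),
      cost (Sum.inr (e, i)) a = if a = 2 then w e else 0)
    (Sat : ((V ⊕ E × Bool) → Fin 3) → Prop)
    (hSat : ∀ A, Sat A ↔ ∀ e : E,
      (A (Sum.inl (ends e).1), A (Sum.inr (e, false))) ∈ PH ∧
      (A (Sum.inr (e, false)), A (Sum.inr (e, true))) ∈ PH ∧
      (A (Sum.inr (e, true)), A (Sum.inl (ends e).2)) ∈ PH) :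
    sInf {x : ℝ | ∃ A : (V ⊕ E × Bool) → Fin 3, Sat A ∧ x = ∑ v, cost v (A v)} =
      sInf {x : ℝ | ∃ c : V → Bool,
        x = ∑ e ∈ Finset.univ.filter (fun e : E => c (ends e).1 = c (ends e).2), w e} := by
  have hW0 : 0 ≤ W := hW ▸ Finset.sum_nonneg (fun e _ => hw e)
  -- nonnegativity of each cost term
  have hcost0 : ∀ (A : (V ⊕ E × Bool) → Fin 3) (v : V ⊕ E × Bool), 0 ≤ cost v (A v) := by
    intro A v
    rcases v with x | ⟨e, i⟩
    · rw [hcostV]; split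
      · exact hW0
      · exact le_refl 0
    · rw [hcostE]; split
      · exact hw e
      · exact le_refl 0
  -- The assignment built from a coloring
  set Ac : (V → Bool) → ((V ⊕ E × Bool) → Fin 3) := fun c v =>
    match v with
    | Sum.inl x => if c x then 1 else 0
    | Sum.inr (e, false) =>
        if c (ends e).1 = c (ends e).2 then 2 else (if c (ends e).1 then 0 else 1)
    | Sum.inr (e, true) =>
        if c (ends e).1 = c (ends e).2 then (if c (ends e).2 then 0 else 1)
        else (if c (ends e).1 then 1 else 0) with hAc
  have hSatAc : ∀ c : V → Bool, Sat (Ac c) := by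
    intro c
    rw [hSat]
    intro e
    simp only [hAc]
    rcases h1 : c (ends e).1 <;> rcases h2 : c (ends e).2 <;>
      simp [PH_iff, h1, h2]
  have hcostAc : ∀ c : V → Bool, ∑ v, cost v (Ac c v) =
      ∑ e ∈ Finset.univ.filter (fun e : E => c (ends e).1 = c (ends e).2), w e := by
    intro c
    rw [Fintype.sum_sum_type]
    have hv : ∀ x : V, cost (Sum.inl x) (Ac c (Sum.inl x)) = 0 := by
      intro x
      rw [hcostV]
      simp only [hAc]
      rcases h : c x <;> simp
    rw [Finset.sum_congr rfl (fun x _ => hv x), Finset.sum_const_zero, zero_add]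
    rw [Fintype.sum_prod_type, Finset.sum_filter]
    refine Finset.sum_congr rfl (fun e _ => ?_)
    rw [Fintype.sum_bool, hcostE, hcostE]
    simp only [hAc]
    by_cases h : c (ends e).1 = c (ends e).2
    · simp only [h, if_true]
      rcases h2 : c (ends e).2 <;> simp
    · simp only [h, if_false]
      rcases h1 : c (ends e).1 <;> simp [h]
  have hne1 : {x : ℝ | ∃ A : (V ⊕ E × Bool) → Fin 3, Sat A ∧ x = ∑ v, cost v (A v)}.Nonempty :=
    ⟨_, Ac (fun _ => true), hSatAc _, rfl⟩
  have hne2 : {x : ℝ | ∃ c : V → Bool,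
      x = ∑ e ∈ Finset.univ.filter (fun e : E => c (ends e).1 = c (ends e).2), w e}.Nonempty :=
    ⟨_, fun _ => true, rfl⟩
  have hbdd1 : BddBelow {x : ℝ | ∃ A : (V ⊕ E × Bool) → Fin 3, Sat A ∧ x = ∑ v, cost v (A v)} := by
    refine ⟨0, fun x hx => ?_⟩
    obtain ⟨A, _, rfl⟩ := hx
    exact Finset.sum_nonneg (fun v _ => hcost0 A v)
  have hbdd2 : BddBelow {x : ℝ | ∃ c : V → Bool,
      x = ∑ e ∈ Finset.univ.filter (fun e : E => c (ends e).1 = c (ends e).2), w e} := by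
    refine ⟨0, fun x hx => ?_⟩
    obtain ⟨c, rfl⟩ := hx
    exact Finset.sum_nonneg (fun e _ => hw e)
  apply le_antisymm
  · -- sInf CSP ≤ sInf uncut
    refine le_csInf hne2 (fun x hx => ?_)
    obtain ⟨c, rfl⟩ := hx
    exact csInf_le hbdd1 ⟨Ac c, hSatAc c, (hcostAc c).symm⟩
  · -- sInf uncut ≤ sInf CSP
    refine le_csInf hne1 (fun x hx => ?_)
    obtain ⟨A, hA, rfl⟩ := hx
    by_cases h2 : ∃ x0 : V, A (Sum.inl x0) = 2
    · obtain ⟨x0, hx0⟩ := h2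
      refine csInf_le_of_le hbdd2 ⟨fun _ => true, rfl⟩ ?_
      have : Finset.univ.filter (fun e : E => (true : Bool) = true) = Finset.univ := by simp
      rw [this, ← hW]
      calc W = cost (Sum.inl x0) (A (Sum.inl x0)) := by rw [hcostV, hx0]; simp
        _ ≤ ∑ v, cost v (A v) :=
          Finset.single_le_sum (fun v _ => hcost0 A v) (Finset.mem_univ _)
    · push_neg at h2
      set c : V → Bool := fun x => decide (A (Sum.inl x) = 1) with hc
      refine csInf_le_of_le hbdd2 ⟨c, rfl⟩ ?_
      rw [Fintype.sum_sum_type]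
      have hv : ∀ x : V, cost (Sum.inl x) (A (Sum.inl x)) = 0 := by
        intro x; rw [hcostV, if_neg (h2 x)]
      rw [Finset.sum_congr rfl (fun x _ => hv x), Finset.sum_const_zero, zero_add]
      rw [Fintype.sum_prod_type, Finset.sum_filter]
      refine Finset.sum_le_sum (fun e _ => ?_)
      rw [Fintype.sum_bool, hcostE, hcostE]
      have a1 : (0:ℝ) ≤ if A (Sum.inr (e, true)) = 2 then w e else 0 := by
        split
        · exact hw e
        · exact le_refl 0
      have a2 : (0:ℝ) ≤ if A (Sum.inr (e, false)) = 2 then w e else 0 := by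
        split
        · exact hw e
        · exact le_refl 0
      by_cases h : c (ends e).1 = c (ends e).2
      · rw [if_pos h]
        obtain ⟨p1, p2, p3⟩ := (hSat A).1 hA e
        have hiff : (A (Sum.inl (ends e).1) = 1) ↔ (A (Sum.inl (ends e).2) = 1) := by
          simpa [hc, decide_eq_decide] using h
        have hkey : A (Sum.inr (e, false)) = 2 ∨ A (Sum.inr (e, true)) = 2 :=
          PH_key (A (Sum.inl (ends e).1)) (A (Sum.inl (ends e).2))
            (A (Sum.inr (e, false))) (A (Sum.inr (e, true)))
            (h2 _) (h2 _) hiff p1 p2 p3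
        rcases hkey with hz | hz
        · rw [if_pos hz] at a2 ⊢
          linarith
        · rw [if_pos hz] at a1 ⊢
          linarith
      · rw [if_neg h]
        linarith
end

section
/- Let D be a finite set and Γ a constraint language over D that contains every permutation relation over D. If some majority operation on D preserves every relation of Γ, then the dual discriminator on D preserves every relation of Γ. -/
/-!
Preserving the graph of a permutation `σ` means commuting with `σ`, so `f` is a majority
operation commuting with every permutation of `D`. For such an `f` the term
`f(x, f(y,x,z), f(y,z,f(z,y,x)))` is the dual discriminator: on triples with a repetition this
is the majority law, and on pairwise distinct `x, y, z` every inner value is obtained from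
`w = f(x,y,z)` by transpositions, which leaves four cases `w = x`, `w = y`, `w = z`,
`w ∉ {x,y,z}`. Operations preserving a relation are closed under composition, so the term
preserves every relation of `Γ`.
-/

/-- A `k`-ary operation `f` on `D` preserves an `m`-ary relation `R ⊆ D^m`. -/
def Preserves {D : Type*} {k m : ℕ} (f : (Fin k → D) → D) (R : Set (Fin m → D)) : Prop :=
  ∀ a : Fin k → (Fin m → D), (∀ i, a i ∈ R) → (fun j => f fun i => a i j) ∈ R

section Composition

variable {D : Type*} {m : ℕ} {R : Set (Fin m → D)}

theorem Preserves.comp {k n : ℕ} {f : (Fin k → D) → D} {g : Fin k → (Fin n → D) → D}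
    (hf : Preserves f R) (hg : ∀ i, Preserves (g i) R) :
    Preserves (fun x => f fun i => g i x) R :=
  fun a ha => hf (fun i j => g i fun l => a l j) fun i => hg i a ha

theorem preserves_eval {n : ℕ} (i : Fin n) : Preserves (fun x : Fin n → D => x i) R :=
  fun _ ha => ha i

theorem Preserves.comp₃ {n : ℕ} {f : (Fin 3 → D) → D} {g₀ g₁ g₂ : (Fin n → D) → D}
    (hf : Preserves f R) (h₀ : Preserves g₀ R) (h₁ : Preserves g₁ R) (h₂ : Preserves g₂ R) :
    Preserves (fun x => f ![g₀ x, g₁ x, g₂ x]) R := by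
  convert hf.comp (g := ![g₀, g₁, g₂]) (Fin.forall_fin_succ.2 ⟨h₀, Fin.forall_fin_two.2 ⟨h₁, h₂⟩⟩)
    using 3
  funext i
  fin_cases i <;> rfl

end Composition

theorem Preserves.map_perm {D : Type*} {k : ℕ} {f : (Fin k → D) → D} {σ : Equiv.Perm D}
    (hf : Preserves f {t : Fin 2 → D | t 1 = σ (t 0)}) (x : Fin k → D) :
    f (σ ∘ x) = σ (f x) :=
  hf (fun i => ![x i, σ (x i)]) fun _ => rfl

section EquivariantMajority

variable {D : Type*} [DecidableEq D] {f : (Fin 3 → D) → D}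
  (hmaj : ∀ a b : D, f ![a, a, b] = a ∧ f ![a, b, a] = a ∧ f ![b, a, a] = a)
  (hequi : ∀ (σ : Equiv.Perm D) (a b c : D), f ![σ a, σ b, σ c] = σ (f ![a, b, c]))
include hmaj hequi

theorem majority_term_eq_of_pairwise_ne {x y z : D} (hxy : x ≠ y) (hxz : x ≠ z) (hyz : y ≠ z) :
    f ![x, f ![y, x, z], f ![y, z, f ![z, y, x]]] = x := by
  set w := f ![x, y, z] with hw
  have hyxz : f ![y, x, z] = Equiv.swap x y w := by
    simpa [Equiv.swap_apply_of_ne_of_ne hxz.symm hyz.symm] using hequi (Equiv.swap x y) x y z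
  have hzyx : f ![z, y, x] = Equiv.swap x z w := by
    simpa [Equiv.swap_apply_of_ne_of_ne hxy.symm hyz] using hequi (Equiv.swap x z) x y z
  have hyzx : f ![y, z, x] = Equiv.swap x z (Equiv.swap x y w) := by
    simpa [Equiv.swap_apply_of_ne_of_ne hxy.symm hyz, hyxz] using hequi (Equiv.swap x z) y x z
  rw [hyxz, hzyx]
  by_cases hwx : w = x
  · simp [hwx, hmaj, ← hw]
  by_cases hwy : w = y
  · simp [hwy, Equiv.swap_apply_of_ne_of_ne hxy.symm hyz, hmaj]
  by_cases hwz : w = z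
  · simp [hwz, Equiv.swap_apply_of_ne_of_ne hxz.symm hyz.symm, hmaj, hyzx]
  have hyzw : f ![y, z, w] = x := by
    simpa [Equiv.swap_apply_of_ne_of_ne hxy.symm (Ne.symm hwy),
      Equiv.swap_apply_of_ne_of_ne hxz.symm (Ne.symm hwz), hyzx,
      Equiv.swap_apply_of_ne_of_ne hwx hwy, Equiv.swap_apply_of_ne_of_ne hwx hwz]
      using hequi (Equiv.swap x w) y z x
  simp [Equiv.swap_apply_of_ne_of_ne hwx hwy, Equiv.swap_apply_of_ne_of_ne hwx hwz, hyzw, hmaj]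

theorem majority_term_eq_dualDisc (x y z : D) :
    f ![x, f ![y, x, z], f ![y, z, f ![z, y, x]]] = dualDisc x y z := by
  unfold dualDisc
  split_ifs with hxy hxz hyz
  · subst hxy; simp [hmaj]
  · subst hxz; simp [hmaj]
  · subst hyz; simp [hmaj]
  · exact majority_term_eq_of_pairwise_ne hmaj hequi hxy hxz hyz

end EquivariantMajority

theorem stmt14_general {D : Type*} [DecidableEq D]
    (Γ : Set (Σ m : ℕ, Set (Fin m → D)))
    (hperm : ∀ σ : Equiv.Perm D,
      (⟨2, {t : Fin 2 → D | t 1 = σ (t 0)}⟩ : Σ m : ℕ, Set (Fin m → D)) ∈ Γ)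
    (f : (Fin 3 → D) → D)
    (hmaj : ∀ a b : D, f ![a, a, b] = a ∧ f ![a, b, a] = a ∧ f ![b, a, a] = a)
    (hf : ∀ R ∈ Γ, Preserves f R.2) :
    ∀ R ∈ Γ, Preserves (fun x : Fin 3 → D => dualDisc (x 0) (x 1) (x 2)) R.2 := by
  have hequi (σ : Equiv.Perm D) (a b c : D) : f ![σ a, σ b, σ c] = σ (f ![a, b, c]) := by
    rw [← (hf _ (hperm σ)).map_perm]
    congr 1
    ext i
    fin_cases i <;> rfl
  intro R hR
  have hfR := hf R hR
  have hterm : Preserves (fun x : Fin 3 → D =>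
      f ![x 0, f ![x 1, x 0, x 2], f ![x 1, x 2, f ![x 2, x 1, x 0]]]) R.2 :=
    hfR.comp₃ (preserves_eval 0)
      (hfR.comp₃ (preserves_eval 1) (preserves_eval 0) (preserves_eval 2))
      (hfR.comp₃ (preserves_eval 1) (preserves_eval 2)
        (hfR.comp₃ (preserves_eval 2) (preserves_eval 1) (preserves_eval 0)))
  simpa only [majority_term_eq_dualDisc hmaj hequi] using hterm

/-- if a constraint language `Γ` contains every permutation relation and is
preserved by some majority operation, then it is preserved by the dual discriminator. -/
theorem stmt14 {D : Type*} [Fintype D] [DecidableEq D]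
    (Γ : Set (Σ m : ℕ, Set (Fin m → D))) (hΓfin : Γ.Finite)
    (hperm : ∀ σ : Equiv.Perm D,
      (⟨2, {t : Fin 2 → D | t 1 = σ (t 0)}⟩ : Σ m : ℕ, Set (Fin m → D)) ∈ Γ)
    (f : (Fin 3 → D) → D)
    (hmaj : ∀ a b : D, f ![a, a, b] = a ∧ f ![a, b, a] = a ∧ f ![b, a, a] = a)
    (hf : ∀ R ∈ Γ, Preserves f R.2) :
    ∀ R ∈ Γ, Preserves (fun x : Fin 3 → D => dualDisc (x 0) (x 1) (x 2)) R.2 :=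
  stmt14_general Γ hperm f hmaj hf
end
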